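/- arXiv:2101.10458 — 4 statements merged into one kernel-verified Lean document; each statement's English description precedes it below -/
import Mathlib

section
/- Let G be a group that is the union of a directed system of subgroups (G_i)_{i ∈ I}, and suppose that for each i there is a retraction r_i : G → G_i. If each G_i is cyclic subgroup separable, then G is cyclic subgroup separable. -/
/-- Let `G` be the union of a directed system of subgroups `(G_i)_{i ∈ I}`, each admitting a
retraction `r_i : G → G_i`. If each `G_i` is cyclic subgroup separable (for all `g, h ∈ G_i`
with `h ∉ ⟨g⟩` there is a homomorphism to a finite group `Q` with `q h ∉ ⟨q g⟩`),
then `G` is cyclic subgroup separable. -/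
theorem cyclicSubgroupSeparable_of_directed_union (G : Type*) [Group G]
    (I : Type*) [Preorder I] [IsDirected I (· ≤ ·)]
    (Gi : I → Subgroup G) (mono : ∀ i j : I, i ≤ j → Gi i ≤ Gi j)
    (union : ∀ g : G, ∃ i, g ∈ Gi i)
    (r : ∀ i, G →* (Gi i)) (hr : ∀ i (x : Gi i), r i (x : G) = x)
    (hsep : ∀ i, ∀ g h : Gi i, h ∉ Subgroup.zpowers g →
      ∃ (Q : Type) (_ : Group Q) (_ : Finite Q) (q : (Gi i) →* Q),
        q h ∉ Subgroup.zpowers (q g)) :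
    ∀ g h : G, h ∉ Subgroup.zpowers g →
      ∃ (Q : Type) (_ : Group Q) (_ : Finite Q) (q : G →* Q),
        q h ∉ Subgroup.zpowers (q g) := by
  intro g h hgh
  obtain ⟨ig, hig⟩ := union g
  obtain ⟨ih, hih⟩ := union h
  obtain ⟨i, hi1, hi2⟩ := directed_of (· ≤ ·) ig ih
  have hg : g ∈ Gi i := mono _ _ hi1 hig
  have hh : h ∈ Gi i := mono _ _ hi2 hih
  have hsub : (⟨h, hh⟩ : Gi i) ∉ Subgroup.zpowers (⟨g, hg⟩ : Gi i) := by
    intro ⟨n, hn⟩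
    exact hgh ⟨n, congrArg Subtype.val hn⟩
  obtain ⟨Q, _, _, q, hq⟩ := hsep i ⟨g, hg⟩ ⟨h, hh⟩ hsub
  refine ⟨Q, ‹_›, ‹_›, q.comp (r i), ?_⟩
  have e1 : q.comp (r i) g = q ⟨g, hg⟩ := by
    simp [MonoidHom.comp_apply, hr i ⟨g, hg⟩]
  have e2 : q.comp (r i) h = q ⟨h, hh⟩ := by
    simp [MonoidHom.comp_apply, hr i ⟨h, hh⟩]
  rw [e1, e2]
  exact hq
end

section
/- Let G be a group that is the union of an increasing chain of subgroups G_0 ≤ G_1 ≤ G_2 ≤ ⋯ such that for every n there is a retraction r_n : G_{n+1} → G_n. If each G_n is residually finite, then G is residually finite. -/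
/-- Let `G` be the union of an increasing chain of subgroups `G_0 ≤ G_1 ≤ ⋯` such that for
every `n` there is a retraction `r_n : G_{n+1} → G_n` (a homomorphism that is the identity
on `G_n`). If each `G_n` is residually finite, then `G` is residually finite. -/
theorem residuallyFinite_of_chain_retracts (G : Type*) [Group G]
    (Gn : ℕ → Subgroup G) (mono : ∀ n, Gn n ≤ Gn (n + 1))
    (union : ∀ g : G, ∃ n, g ∈ Gn n)
    (r : ∀ n, (Gn (n + 1)) →* (Gn n))
    (hr : ∀ n (x : G) (hx : x ∈ Gn n), ((r n ⟨x, mono n hx⟩ : Gn n) : G) = x)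
    (hRF : ∀ n, ∀ x : Gn n, x ≠ 1 →
      ∃ (Q : Type) (_ : Group Q) (_ : Finite Q) (q : (Gn n) →* Q), q x ≠ 1) :
    ∀ g : G, g ≠ 1 → ∃ (Q : Type) (_ : Group Q) (_ : Finite Q) (q : G →* Q), q g ≠ 1 := by
  intro g hg
  obtain ⟨n, hgn⟩ := union g
  have mono' : ∀ a b, a ≤ b → Gn a ≤ Gn b := by
    intro a b hab
    induction b, hab using Nat.le_induction with
    | base => exact le_rfl
    | succ b hb ih => exact ih.trans (mono b)
  -- composite retraction from Gn (n+m) down to Gn n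
  let ρ : ∀ m, Gn (n + m) →* Gn n := fun m =>
    Nat.rec (MonoidHom.id _) (fun k ih => ih.comp (r (n + k))) m
  have step : ∀ m (x : G) (hx : x ∈ Gn (n + m)),
      ρ (m + 1) ⟨x, mono _ hx⟩ = ρ m ⟨x, hx⟩ := by
    intro m x hx
    show ρ m (r (n + m) ⟨x, mono _ hx⟩) = ρ m ⟨x, hx⟩
    congr 1
    exact Subtype.ext (hr (n + m) x hx)
  have key : ∀ k m (x : G) (hx : x ∈ Gn (n + m)) (hx' : x ∈ Gn (n + (m + k))),
      ρ m ⟨x, hx⟩ = ρ (m + k) ⟨x, hx'⟩ := by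
    intro k
    induction k with
    | zero => intro m x hx hx'; rfl
    | succ k ih =>
      intro m x hx hx'
      have hxk : x ∈ Gn (n + (m + k)) := mono' _ _ (by omega) hx
      rw [ih m x hx hxk]
      exact (step (m + k) x hxk).symm
  have indep : ∀ m m' (x : G) (hx : x ∈ Gn (n + m)) (hx' : x ∈ Gn (n + m')),
      ρ m ⟨x, hx⟩ = ρ m' ⟨x, hx'⟩ := by
    intro m m' x hx hx'
    rcases le_total m m' with h | h
    · obtain ⟨k, rfl⟩ := Nat.exists_eq_add_of_le h
      exact key k m x hx hx'
    · obtain ⟨k, rfl⟩ := Nat.exists_eq_add_of_le h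
      exact (key k m' x hx' hx).symm
  have memf : ∀ x : G, x ∈ Gn (n + (union x).choose) := fun x =>
    mono' _ _ (Nat.le_add_left _ _) (union x).choose_spec
  let f : G → Gn n := fun x => ρ (union x).choose ⟨x, memf x⟩
  have hf : ∀ m (x : G) (hx : x ∈ Gn (n + m)), f x = ρ m ⟨x, hx⟩ := fun m x hx =>
    indep _ m x _ hx
  have fone : f 1 = 1 := by
    rw [hf 0 1 (one_mem _)]
    rfl
  have fmul : ∀ x y : G, f (x * y) = f x * f y := by
    intro x y
    obtain ⟨a, ha⟩ := union x
    obtain ⟨b, hb⟩ := union y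
    have hxa : x ∈ Gn (n + max a b) := mono' _ _ (by omega) ha
    have hyb : y ∈ Gn (n + max a b) := mono' _ _ (by omega) hb
    have hxy : x * y ∈ Gn (n + max a b) := mul_mem hxa hyb
    rw [hf _ x hxa, hf _ y hyb, hf _ (x * y) hxy]
    have : (⟨x * y, hxy⟩ : Gn (n + max a b)) = ⟨x, hxa⟩ * ⟨y, hyb⟩ := rfl
    rw [this, map_mul]
  let π : G →* Gn n := { toFun := f, map_one' := fone, map_mul' := fmul }
  have hπg : π g = ⟨g, hgn⟩ := hf 0 g hgn
  have hne : (⟨g, hgn⟩ : Gn n) ≠ 1 := fun h => hg (congrArg Subtype.val h)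
  obtain ⟨Q, _, _, q, hq⟩ := hRF n ⟨g, hgn⟩ hne
  exact ⟨Q, ‹_›, ‹_›, q.comp π, by simpa [hπg] using hq⟩
end

section
/- Let G and H be groups with subgroups L ≤ G and M ≤ H. The free product of G and H with commuting subgroups L and M, defined as the quotient of G ∗ H by the normal closure of {[ℓ,m] : ℓ ∈ L, m ∈ M}, is isomorphic to the amalgamated free product G ∗_L (L × M) ∗_M H, where L is identified with L × {1} and M with {1} × M. -/
open Monoid
open scoped commutatorElement

variable (G H : Type*) [Group G] [Group H] (L : Subgroup G) (M : Subgroup H)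

/-- The free product of `G` and `H` with commuting subgroups `L` and `M`: the quotient of
`G ∗ H` by the normal closure of the commutators `[ℓ, m]`, `ℓ ∈ L`, `m ∈ M`. -/
def FreeProdCommuting :=
  Coprod G H ⧸ Subgroup.normalClosure
    {x : Coprod G H | ∃ l ∈ L, ∃ m ∈ M, x = ⁅(Coprod.inl l : Coprod G H), Coprod.inr m⁆}

instance : Group (FreeProdCommuting G H L M) := by
  unfold FreeProdCommuting; infer_instance

/-- The relations defining the amalgamated product `G ∗_L (L × M) ∗_M H` as a quotient of the
free product `(G ∗ (L × M)) ∗ H`: `L ≤ G` is identified with `L × {1} ≤ L × M` and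
`M ≤ H` is identified with `{1} × M ≤ L × M`. -/
def amalgamRels : Subgroup (Coprod (Coprod G (L × M)) H) :=
  Subgroup.normalClosure
    ({x : Coprod (Coprod G (L × M)) H | ∃ l : L,
        x = (Coprod.inl (Coprod.inl (l : G)) : Coprod (Coprod G (L × M)) H) *
          ((Coprod.inl (Coprod.inr ((l, 1) : L × M)) : Coprod (Coprod G (L × M)) H))⁻¹} ∪
     {x : Coprod (Coprod G (L × M)) H | ∃ m : M,
        x = (Coprod.inl (Coprod.inr ((1, m) : L × M)) : Coprod (Coprod G (L × M)) H) *
          ((Coprod.inr (m : H) : Coprod (Coprod G (L × M)) H))⁻¹})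

instance : (amalgamRels G H L M).Normal := by
  unfold amalgamRels; infer_instance

/-- The amalgamated free product `G ∗_L (L × M) ∗_M H`. -/
def Amalgam := Coprod (Coprod G (L × M)) H ⧸ amalgamRels G H L M

instance : Group (Amalgam G H L M) := by
  unfold Amalgam; infer_instance

/-!
Both groups have the same universal property: a homomorphism out of either one amounts to
homomorphisms `f : G →* K` and `g : H →* K` such that `f L` commutes with `g M`. In the amalgam,
`L × M` is generated by `L × 1 = L` and `1 × M = M`, which commute there; conversely such a pair
extends to `L × M` by `(l, m) ↦ f l * g m`.
-/

namespace FreeProdCommuting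

variable {G H}

abbrev rels : Subgroup (Coprod G H) :=
  Subgroup.normalClosure
    {x : Coprod G H | ∃ l ∈ L, ∃ m ∈ M, x = ⁅(Coprod.inl l : Coprod G H), Coprod.inr m⁆}

variable {L M} {K : Type*} [Group K]

def mk : Coprod G H →* FreeProdCommuting G H L M := QuotientGroup.mk' (rels L M)

theorem commute_mk_inl_mk_inr {l : G} (hl : l ∈ L) {m : H} (hm : m ∈ M) :
    Commute (mk (Coprod.inl l) : FreeProdCommuting G H L M) (mk (Coprod.inr m)) := by
  rw [← commutatorElement_eq_one_iff_commute, ← map_commutatorElement]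
  exact (QuotientGroup.eq_one_iff _).2 <| Subgroup.subset_normalClosure ⟨l, hl, m, hm, rfl⟩

def lift (f : G →* K) (g : H →* K) (hfg : ∀ l ∈ L, ∀ m ∈ M, Commute (f l) (g m)) :
    FreeProdCommuting G H L M →* K :=
  QuotientGroup.lift (rels L M) (Coprod.lift f g) <| Subgroup.normalClosure_le_normal <| by
    rintro _ ⟨l, hl, m, hm, rfl⟩
    rw [SetLike.mem_coe, MonoidHom.mem_ker, map_commutatorElement,
      commutatorElement_eq_one_iff_commute, Coprod.lift_apply_inl, Coprod.lift_apply_inr]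
    exact hfg l hl m hm

theorem hom_ext {φ ψ : FreeProdCommuting G H L M →* K}
    (hG : ∀ g : G, φ (mk (Coprod.inl g)) = ψ (mk (Coprod.inl g)))
    (hH : ∀ h : H, φ (mk (Coprod.inr h)) = ψ (mk (Coprod.inr h))) : φ = ψ :=
  QuotientGroup.monoidHom_ext (rels L M) <| Coprod.hom_ext (MonoidHom.ext hG) (MonoidHom.ext hH)

end FreeProdCommuting

namespace Amalgam

variable {G H L M} {K : Type*} [Group K]

def mk : Coprod (Coprod G (L × M)) H →* Amalgam G H L M := QuotientGroup.mk' (amalgamRels G H L M)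

theorem mk_inl_inl_coe (l : L) :
    (mk (Coprod.inl (Coprod.inl (l : G))) : Amalgam G H L M) =
      mk (Coprod.inl (Coprod.inr (l, 1))) := by
  refine QuotientGroup.eq_iff_div_mem.2 ?_
  rw [div_eq_mul_inv]
  exact Subgroup.subset_normalClosure (Or.inl ⟨l, rfl⟩)

theorem mk_inr_coe (m : M) :
    (mk (Coprod.inr (m : H)) : Amalgam G H L M) = mk (Coprod.inl (Coprod.inr (1, m))) := by
  refine (QuotientGroup.eq_iff_div_mem.2 ?_).symm
  rw [div_eq_mul_inv]
  exact Subgroup.subset_normalClosure (Or.inr ⟨m, rfl⟩)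

theorem mk_inl_inr_eq_mul (p : L × M) :
    (mk (Coprod.inl (Coprod.inr p)) : Amalgam G H L M) =
      mk (Coprod.inl (Coprod.inl (p.1 : G))) * mk (Coprod.inr (p.2 : H)) := by
  rw [mk_inl_inl_coe, mk_inr_coe, ← map_mul, ← map_mul, ← map_mul, Prod.fst_mul_snd]

theorem commute_mk_inl_inl_mk_inr (l : L) (m : M) :
    Commute (mk (Coprod.inl (Coprod.inl (l : G))) : Amalgam G H L M) (mk (Coprod.inr (m : H))) := by
  rw [mk_inl_inl_coe, mk_inr_coe]
  exact ((MonoidHom.commute_inl_inr l m).map Coprod.inr).map (mk.comp Coprod.inl)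

theorem amalgamRels_le_ker {φ : Coprod (Coprod G (L × M)) H →* K}
    (hL : ∀ l : L, φ (Coprod.inl (Coprod.inl (l : G))) = φ (Coprod.inl (Coprod.inr (l, 1))))
    (hM : ∀ m : M, φ (Coprod.inl (Coprod.inr (1, m))) = φ (Coprod.inr (m : H))) :
    amalgamRels G H L M ≤ φ.ker := by
  refine Subgroup.normalClosure_le_normal ?_
  rintro _ (⟨l, rfl⟩ | ⟨m, rfl⟩) <;> rw [SetLike.mem_coe, MonoidHom.mem_ker]
  -- `⁻¹` here is `Coprod`'s own `Inv` instance, so `map_mul_inv` only applies up to unfolding.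
  · exact (map_mul_inv φ _ _).trans (mul_inv_eq_one.2 (hL l))
  · exact (map_mul_inv φ _ _).trans (mul_inv_eq_one.2 (hM m))

def lift (f : G →* K) (p : L × M →* K) (g : H →* K) (hL : ∀ l : L, f l = p (l, 1))
    (hM : ∀ m : M, p (1, m) = g m) : Amalgam G H L M →* K :=
  QuotientGroup.lift (amalgamRels G H L M) (Coprod.lift (Coprod.lift f p) g) <|
    amalgamRels_le_ker (by simpa using hL) (by simpa using hM)

theorem hom_ext {φ ψ : Amalgam G H L M →* K}
    (hG : ∀ g : G, φ (mk (Coprod.inl (Coprod.inl g))) = ψ (mk (Coprod.inl (Coprod.inl g))))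
    (hH : ∀ h : H, φ (mk (Coprod.inr h)) = ψ (mk (Coprod.inr h))) : φ = ψ := by
  refine QuotientGroup.monoidHom_ext _ <|
    Coprod.hom_ext (Coprod.hom_ext (MonoidHom.ext hG) (MonoidHom.ext fun p => ?_)) (MonoidHom.ext hH)
  change φ (mk _) = ψ (mk _)
  rw [mk_inl_inr_eq_mul, map_mul, map_mul, hG, hH]

end Amalgam

namespace FreeProdCommuting

variable {G H L M}

def toAmalgam : FreeProdCommuting G H L M →* Amalgam G H L M :=
  lift (Amalgam.mk.comp (Coprod.inl.comp Coprod.inl)) (Amalgam.mk.comp Coprod.inr)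
    fun l hl m hm => Amalgam.commute_mk_inl_inl_mk_inr ⟨l, hl⟩ ⟨m, hm⟩

def prodHom : L × M →* FreeProdCommuting G H L M :=
  MonoidHom.noncommCoprod ((mk.comp Coprod.inl).comp L.subtype) ((mk.comp Coprod.inr).comp M.subtype)
    fun l m => commute_mk_inl_mk_inr l.2 m.2

theorem prodHom_apply (p : L × M) :
    prodHom p = mk (Coprod.inl (p.1 : G)) * mk (Coprod.inr (p.2 : H)) :=
  rfl

def ofAmalgam : Amalgam G H L M →* FreeProdCommuting G H L M :=
  Amalgam.lift (mk.comp Coprod.inl) prodHom (mk.comp Coprod.inr) (fun _ => by simp [prodHom_apply])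
    (fun _ => by simp [prodHom_apply])

def mulEquivAmalgam : FreeProdCommuting G H L M ≃* Amalgam G H L M :=
  toAmalgam.toMulEquiv ofAmalgam (hom_ext (fun _ => rfl) fun _ => rfl)
    (Amalgam.hom_ext (fun _ => rfl) fun _ => rfl)

end FreeProdCommuting

/-- The free product of `G` and `H` with commuting subgroups `L ≤ G` and `M ≤ H` is
isomorphic to the amalgamated free product `G ∗_L (L × M) ∗_M H`; the isomorphism is
compatible with the canonical copies of `G` and `H` on both sides. -/
theorem freeProdCommuting_iso_amalgam :
    ∃ e : FreeProdCommuting G H L M ≃* Amalgam G H L M,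
      (∀ g : G, e (QuotientGroup.mk (Coprod.inl g)) =
        (QuotientGroup.mk (Coprod.inl (Coprod.inl g)) : Amalgam G H L M)) ∧
      (∀ h : H, e (QuotientGroup.mk (Coprod.inr h)) =
        (QuotientGroup.mk (Coprod.inr h) : Amalgam G H L M)) := by
  exact ⟨FreeProdCommuting.mulEquivAmalgam, fun _ => rfl, fun _ => rfl⟩
end

section
/- Let G be an equationally Noetherian group with decidable word problem. Then every finitely generated, recursively presented group H that is residually G has decidable word problem. -/
/-!
The word problem of `H` is r.e. by hypothesis, so it suffices to enumerate the words that are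
nontrivial in `H`. Viewed as coefficient-free equations over `G`, the relators of `H` are
equivalent to a finite subsystem `R₀`, because `G` is equationally Noetherian. As `H` is
residually `G`, a word `w` is nontrivial in `H` exactly when some assignment of the generators
of `H` to elements of `G` solves `R₀` but not `w`. Assignments are given by tuples of words in
the generators of `G`, and checking one of them takes finitely many instances of the word
problem of `G`; a search over all tuples then semi-decides `w ≠ 1` in `H`.
-/

open Monoid

namespace ComputablePred

variable {α : Type*} [Primcodable α]

theorem comp {β : Type*} [Primcodable β] {p : β → Prop} {f : α → β} (hp : ComputablePred p)
    (hf : Computable f) : ComputablePred fun a => p (f a) := by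
  obtain ⟨_, hp⟩ := hp
  exact ⟨inferInstance, hp.comp hf⟩

protected theorem and {p q : α → Prop} (hp : ComputablePred p) (hq : ComputablePred q) :
    ComputablePred fun a => p a ∧ q a := by
  obtain ⟨_, hp⟩ := hp
  obtain ⟨_, hq⟩ := hq
  exact Computable.computablePred <| (Primrec.and.to_comp.comp hp hq).of_eq fun a => by simp

theorem forall_mem_of_finite {β : Type*} {p : α → β → Prop} {s : Set β} (hs : s.Finite)
    (hp : ∀ b ∈ s, ComputablePred fun a => p a b) : ComputablePred fun a => ∀ b ∈ s, p a b := by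
  induction s, hs using Set.Finite.induction_on with
  | empty =>
    exact (Computable.computablePred (p := fun _ : α => True) (Computable.const true)).of_eq
      fun a => by simp
  | @insert b s _ _ ih =>
    refine ((hp b (Set.mem_insert b s)).and
      (ih fun b' hb' => hp b' (Set.mem_insert_of_mem b hb'))).of_eq fun a => ?_
    simp

end ComputablePred

theorem REPred.exists_of_computablePred {α β : Type*} [Primcodable α] [Primcodable β]
    {p : α × β → Prop} (hp : ComputablePred p) : REPred fun a => ∃ b, p (a, b) := by
  obtain ⟨f, hf, rfl⟩ := ComputablePred.computable_iff.1 hp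
  let search : α → ℕ → Option β := fun a k =>
    (Encodable.decode k).bind fun b => bif f (a, b) then some b else none
  have hsearch : Computable₂ search :=
    Computable.option_bind (Computable.decode.comp Computable.snd)
      (Computable.cond (hf.comp ((Computable.fst.comp Computable.fst).pair Computable.snd))
        (Computable.option_some.comp Computable.snd) (Computable.const none))
  refine (Partrec.rfindOpt hsearch).dom_re.of_eq fun a => ?_
  rw [Nat.rfindOpt_dom]
  constructor
  · rintro ⟨k, b, hb⟩
    simp only [search, Option.mem_def, Option.bind_eq_some_iff] at hb
    obtain ⟨b', -, hb'⟩ := hb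
    exact ⟨b', by cases h : f (a, b') <;> simp_all⟩
  · rintro ⟨b, hb⟩
    exact ⟨Encodable.encode b, b, by simp [search, hb]⟩

def substWord {α β : Type*} (c : α → List (β × Bool)) (w : List (α × Bool)) :
    List (β × Bool) :=
  w.flatMap fun x => bif x.2 then c x.1 else FreeGroup.invRev (c x.1)

theorem map_mk_substWord {α β G : Type*} [Group G] (π : FreeGroup β →* G)
    (c : α → List (β × Bool)) (w : List (α × Bool)) :
    π (FreeGroup.mk (substWord c w)) =
      FreeGroup.lift (fun a => π (FreeGroup.mk (c a))) (FreeGroup.mk w) := by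
  induction w with
  | nil => simp [substWord, ← FreeGroup.one_eq_mk]
  | cons x w ih =>
    obtain ⟨a, b⟩ := x
    simp only [FreeGroup.lift_mk] at ih ⊢
    cases b <;> simp [substWord, ← FreeGroup.mul_mk, ← FreeGroup.inv_mk, ← ih]

theorem Primrec.freeGroup_invRev {β : Type*} [Primcodable β] :
    Primrec (FreeGroup.invRev (α := β)) :=
  (Primrec.list_reverse.comp (Primrec.list_map Primrec.id ((Primrec.fst.comp Primrec.snd).pair
    (Primrec.not.comp (Primrec.snd.comp Primrec.snd))).to₂)).of_eq fun w => by
      simp [FreeGroup.invRev]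

theorem Primrec.substWord {β : Type*} [Primcodable β] {n : ℕ} :
    Primrec₂ (substWord (α := Fin n) (β := β)) := by
  have hletter : Primrec fun x : ((Fin n → List (β × Bool)) × List (Fin n × Bool)) ×
      (Fin n × Bool) => x.1.1 x.2.1 :=
    Primrec.fin_app.comp (Primrec.fst.comp Primrec.fst) (Primrec.fst.comp Primrec.snd)
  exact Primrec.list_flatMap Primrec.snd <| Primrec.cond (Primrec.snd.comp Primrec.snd) hletter
    (Primrec.freeGroup_invRev.comp hletter)

def IsEquationallyNoetherian (G : Type*) [Group G] : Prop :=
  ∀ (n : ℕ) (Sys : Set (Coprod G (FreeGroup (Fin n)))),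
    ∃ Sys0 : Set (Coprod G (FreeGroup (Fin n))), Sys0 ⊆ Sys ∧ Sys0.Finite ∧
      ∀ g : Fin n → G,
        (∀ σ ∈ Sys0, Coprod.lift (MonoidHom.id G) (FreeGroup.lift g) σ = 1) ↔
        (∀ σ ∈ Sys, Coprod.lift (MonoidHom.id G) (FreeGroup.lift g) σ = 1)

theorem IsEquationallyNoetherian.exists_finite_subset_lift_eq_one {G : Type*} [Group G]
    (hG : IsEquationallyNoetherian G) {n : ℕ} (R : Set (FreeGroup (Fin n))) :
    ∃ R₀ ⊆ R, R₀.Finite ∧ ∀ g : Fin n → G,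
      (∀ r ∈ R₀, FreeGroup.lift g r = 1) → ∀ r ∈ R, FreeGroup.lift g r = 1 := by
  obtain ⟨Sys0, hsub, hfin, hequiv⟩ := hG n (Coprod.inr '' R)
  refine ⟨Coprod.inr ⁻¹' Sys0, ?_, hfin.preimage Coprod.inr_injective.injOn, fun g hg r hr => ?_⟩
  · intro r hr
    obtain ⟨r', hr', hrr'⟩ := hsub hr
    rwa [← Coprod.inr_injective hrr']
  · have hSys0 : ∀ σ ∈ Sys0, Coprod.lift (MonoidHom.id G) (FreeGroup.lift g) σ = 1 := by
      intro σ hσ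
      obtain ⟨r', -, rfl⟩ := hsub hσ
      simpa using hg r' hσ
    simpa using (hequiv g).1 hSys0 _ (Set.mem_image_of_mem _ hr)

theorem ne_one_iff_exists_lift_ne_one {α G H : Type*} [Group G] [Group H]
    (hres : ∀ h : H, h ≠ 1 → ∃ f : H →* G, f h ≠ 1) (π : FreeGroup α →* H)
    {R₀ : Set (FreeGroup α)} (hR₀ : R₀ ⊆ π.ker)
    (hR₀_ker : ∀ g : α → G, (∀ r ∈ R₀, FreeGroup.lift g r = 1) →
      ∀ r ∈ π.ker, FreeGroup.lift g r = 1) (x : FreeGroup α) :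
    π x ≠ 1 ↔ ∃ g : α → G, (∀ r ∈ R₀, FreeGroup.lift g r = 1) ∧ FreeGroup.lift g x ≠ 1 := by
  constructor
  · intro hx
    obtain ⟨f, hf⟩ := hres (π x) hx
    have hlift : FreeGroup.lift (fun a => f (π (FreeGroup.of a))) = f.comp π :=
      FreeGroup.ext_hom _ _ fun a => by simp
    refine ⟨fun a => f (π (FreeGroup.of a)), fun r hr => ?_, ?_⟩
    · rw [hlift, MonoidHom.comp_apply, hR₀ hr, map_one]
    · rwa [hlift]
  · rintro ⟨g, hg, hgx⟩ hx
    exact hgx (hR₀_ker g hg x hx)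

theorem computablePred_lift_eq_one_on_and_ne_one {β G : Type*} [Primcodable β] [Group G]
    {n : ℕ} {π : FreeGroup β →* G}
    (hWP : ComputablePred fun w : List (β × Bool) => π (FreeGroup.mk w) = 1)
    {R₀ : Set (FreeGroup (Fin n))} (hR₀ : R₀.Finite) :
    ComputablePred fun x : List (Fin n × Bool) × (Fin n → List (β × Bool)) =>
      (∀ r ∈ R₀, FreeGroup.lift (fun i => π (FreeGroup.mk (x.2 i))) r = 1) ∧
        FreeGroup.lift (fun i => π (FreeGroup.mk (x.2 i))) (FreeGroup.mk x.1) ≠ 1 := by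
  have hsubst : ∀ {w : List (Fin n × Bool) × (Fin n → List (β × Bool)) → List (Fin n × Bool)},
      Computable w → ComputablePred fun x =>
        FreeGroup.lift (fun i => π (FreeGroup.mk (x.2 i))) (FreeGroup.mk (w x)) = 1 :=
    fun hw => (hWP.comp (Primrec.substWord.to_comp.comp Computable.snd hw)).of_eq
      fun x => by rw [map_mk_substWord]
  refine (ComputablePred.forall_mem_of_finite hR₀ fun r _ => ?_).and (hsubst Computable.fst).not
  exact (hsubst (Computable.const r.toWord)).of_eq fun x => by rw [FreeGroup.mk_toWord]

theorem decidable_word_problem_of_residually_equationallyNoetherian_general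
    (G : Type) [Group G] (m : ℕ) (πG : FreeGroup (Fin m) →* G)
    (hπG : Function.Surjective πG)
    (hWP : ComputablePred fun w : List (Fin m × Bool) => πG (FreeGroup.mk w) = 1)
    (hEN : ∀ (n : ℕ) (Sys : Set (Coprod G (FreeGroup (Fin n)))),
      ∃ Sys0 : Set (Coprod G (FreeGroup (Fin n))), Sys0 ⊆ Sys ∧ Sys0.Finite ∧
        ∀ g : Fin n → G,
          (∀ σ ∈ Sys0, Coprod.lift (MonoidHom.id G) (FreeGroup.lift g) σ = 1) ↔
          (∀ σ ∈ Sys, Coprod.lift (MonoidHom.id G) (FreeGroup.lift g) σ = 1))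
    (H : Type) [Group H] (n : ℕ) (πH : FreeGroup (Fin n) →* H)
    (hRP : REPred fun w : List (Fin n × Bool) => πH (FreeGroup.mk w) = 1)
    (hres : ∀ h : H, h ≠ 1 → ∃ f : H →* G, f h ≠ 1) :
    ComputablePred fun w : List (Fin n × Bool) => πH (FreeGroup.mk w) = 1 := by
  obtain ⟨R₀, hR₀, hR₀_fin, hR₀_ker⟩ :=
    IsEquationallyNoetherian.exists_finite_subset_lift_eq_one hEN (n := n) πH.ker
  have hwords : Function.Surjective fun (c : Fin n → List (Fin m × Bool)) i =>
      πG (FreeGroup.mk (c i)) :=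
    (hπG.comp fun x => ⟨x.toWord, FreeGroup.mk_toWord⟩).comp_left
  have hcoRE : REPred fun w : List (Fin n × Bool) => ¬πH (FreeGroup.mk w) = 1 :=
    (REPred.exists_of_computablePred
      (computablePred_lift_eq_one_on_and_ne_one hWP hR₀_fin)).of_eq fun w => by
      rw [← ne_eq, ne_one_iff_exists_lift_ne_one hres πH hR₀ hR₀_ker, hwords.exists]
  exact ComputablePred.computable_iff_re_compl_re'.2 ⟨hRP, hcoRE⟩

/-- Let `G` be an equationally Noetherian group (every system of equations over `G` in
finitely many variables is equivalent to a finite subsystem) with decidable word problem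
(with respect to a marking by a finite generating set). Then every finitely generated,
recursively presented group `H` that is residually `G` has decidable word problem. -/
theorem decidable_word_problem_of_residually_equationallyNoetherian
    (G : Type) [Group G] (m : ℕ) (πG : FreeGroup (Fin m) →* G)
    (hπG : Function.Surjective πG)
    (hWP : ComputablePred fun w : List (Fin m × Bool) => πG (FreeGroup.mk w) = 1)
    (hEN : ∀ (n : ℕ) (Sys : Set (Coprod G (FreeGroup (Fin n)))),
      ∃ Sys0 : Set (Coprod G (FreeGroup (Fin n))), Sys0 ⊆ Sys ∧ Sys0.Finite ∧
        ∀ g : Fin n → G,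
          (∀ σ ∈ Sys0, Coprod.lift (MonoidHom.id G) (FreeGroup.lift g) σ = 1) ↔
          (∀ σ ∈ Sys, Coprod.lift (MonoidHom.id G) (FreeGroup.lift g) σ = 1))
    (H : Type) [Group H] (n : ℕ) (πH : FreeGroup (Fin n) →* H)
    (hπH : Function.Surjective πH)
    (hRP : REPred fun w : List (Fin n × Bool) => πH (FreeGroup.mk w) = 1)
    (hres : ∀ h : H, h ≠ 1 → ∃ f : H →* G, f h ≠ 1) :
    ComputablePred fun w : List (Fin n × Bool) => πH (FreeGroup.mk w) = 1 :=
  decidable_word_problem_of_residually_equationallyNoetherian_general G m πG hπG hWP hEN H n πH hRP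
    hres
end
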